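/- arXiv:1311.0656 — 4 statements merged into one kernel-verified Lean document; each statement's English description precedes it below -/
import Mathlib

section
/- When the joint and marginal estimators are computed with the same number of replications R, the difference of their variances equals Var(Î_J) − Var(Î_M) = (1/R) Σ_{k=2}^N (1 − R^{−(k−1)}) Σ_{C ⊆ {1,…,N}, |C| = k} [ ∏_{i ∈ C} Vᵢ · ∏_{j ∉ C} Eⱼ² ], and in particular Var(Î_J) ≥ Var(Î_M). -/
/-!
For the sample means `Zᵢ = R⁻¹ ∑ᵣ Yᵢʳ` and the products `Pʳ = ∏ᵢ Yᵢʳ`, independence of the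
whole array makes the `Zᵢ` independent and the `Pʳ` independent (they are functions of
disjoint rows, resp. columns). For independent `fᵢ`,
`Var (∏ fᵢ) = ∏ (Var fᵢ + (E fᵢ)²) - ∏ (E fᵢ)²`, and averaging `R` independent copies divides the
variance by `R`, so
`Var Î_J = R⁻¹ (∏ (Vᵢ + Eᵢ²) - ∏ Eᵢ²)` and `Var Î_M = ∏ (R⁻¹ Vᵢ + Eᵢ²) - ∏ Eᵢ²`.
Expanding both products over subsets `C`, the monomial `∏_C Vᵢ ∏_{Cᶜ} Eⱼ²` with `|C| = k` gets
the coefficient `R⁻¹ - R⁻ᵏ` in the difference, which vanishes for `k ≤ 1` and is `≥ 0` otherwise.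
-/
open MeasureTheory ProbabilityTheory Finset

namespace ProbabilityTheory

variable {Ω : Type*} {mΩ : MeasurableSpace Ω} {μ : Measure Ω}

lemma iIndepFun_curry {ι κ : Type*} {𝓧 : ι → κ → Type*} {m𝓧 : ∀ i j, MeasurableSpace (𝓧 i j)}
    {X : (i : ι) → (j : κ) → Ω → 𝓧 i j} (mX : ∀ i j, Measurable (X i j))
    (h : iIndepFun (fun p : ι × κ ↦ X p.1 p.2) μ) :
    iIndepFun (fun i ω ↦ (X i · ω)) μ := by
  have := h.isProbabilityMeasure
  have hrow (i : ι) : μ.map (fun ω j ↦ X i j ω) = Measure.infinitePi (fun j ↦ μ.map (X i j)) := by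
    have hi := h.precomp (Prod.mk_right_injective (β := κ) i)
    exact (iIndepFun_iff_map_fun_eq_infinitePi_map (mX i)).1 hi
  have hpairs : μ.map (fun ω (p : (_ : ι) × κ) ↦ X p.1 p.2 ω)
      = Measure.infinitePi (fun p : (_ : ι) × κ ↦ μ.map (X p.1 p.2)) := by
    have hσ := h.precomp (Equiv.sigmaEquivProd ι κ).injective
    exact (iIndepFun_iff_map_fun_eq_infinitePi_map (fun p ↦ mX p.1 p.2)).1 hσ
  have hcurry : (fun ω i j ↦ X i j ω)
      = MeasurableEquiv.piCurry 𝓧 ∘ (fun ω (p : (_ : ι) × κ) ↦ X p.1 p.2 ω) := rfl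
  have : ∀ i j, IsProbabilityMeasure (μ.map (X i j)) :=
    fun i j ↦ Measure.isProbabilityMeasure_map (mX i j).aemeasurable
  rw [iIndepFun_iff_map_fun_eq_infinitePi_map (fun i ↦ measurable_pi_lambda _ (mX i)), hcurry,
    ← Measure.map_map (by fun_prop) (measurable_pi_lambda _ fun p ↦ mX p.1 p.2), hpairs,
    Measure.infinitePi_map_piCurry (fun i j ↦ μ.map (X i j))]
  simp_rw [hrow]

lemma iIndepFun.integrable_fun_finset_prod {ι : Type*} {f : ι → Ω → ℝ} (h : iIndepFun f μ)
    (hf : ∀ i, Measurable (f i)) (hint : ∀ i, Integrable (f i) μ) (s : Finset ι) :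
    Integrable (fun ω ↦ ∏ i ∈ s, f i ω) μ := by
  refine ⟨s.aestronglyMeasurable_fun_prod fun i _ ↦ (hint i).1, ?_⟩
  have hnorm : iIndepFun (fun i ω ↦ (‖f i ω‖₊ : ENNReal)) μ :=
    h.comp _ fun _ ↦ measurable_nnnorm.coe_nnreal_ennreal
  simp only [hasFiniteIntegral_iff_enorm, enorm_eq_nnnorm, nnnorm_prod,
    ENNReal.ofNNReal_finsetProd]
  rw [lintegral_prod_eq_prod_lintegral_of_indepFun s _ hnorm
    fun i ↦ (hf i).nnnorm.coe_nnreal_ennreal]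
  exact ENNReal.prod_lt_top fun i _ ↦ (hint i).2

variable {ι : Type*} [Fintype ι] {f : ι → Ω → ℝ}

lemma iIndepFun.memLp_two_fun_prod (h : iIndepFun f μ) (hf : ∀ i, Measurable (f i))
    (hL2 : ∀ i, MemLp (f i) 2 μ) : MemLp (fun ω ↦ ∏ i, f i ω) 2 μ := by
  rw [memLp_two_iff_integrable_sq (univ.aestronglyMeasurable_fun_prod fun i _ ↦ (hL2 i).1)]
  simp_rw [← prod_pow]
  exact (h.comp _ fun _ ↦ measurable_id.pow_const 2).integrable_fun_finset_prod
    (fun i ↦ (hf i).pow_const 2) (fun i ↦ (hL2 i).integrable_sq) univ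

lemma iIndepFun.variance_fun_prod (h : iIndepFun f μ) (hf : ∀ i, Measurable (f i))
    (hL2 : ∀ i, MemLp (f i) 2 μ) :
    variance (fun ω ↦ ∏ i, f i ω) μ
      = ∏ i, (variance (f i) μ + (μ[f i]) ^ 2) - ∏ i, (μ[f i]) ^ 2 := by
  have := h.isProbabilityMeasure
  have hsq : iIndepFun (fun i ω ↦ f i ω ^ 2) μ := h.comp _ fun _ ↦ measurable_id.pow_const 2
  have hsecond (i : ι) : variance (f i) μ + (μ[f i]) ^ 2 = ∫ ω, f i ω ^ 2 ∂μ := by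
    rw [variance_eq_sub (hL2 i)]; simp
  rw [variance_eq_sub (h.memLp_two_fun_prod hf hL2)]
  simp only [Pi.pow_apply, ← prod_pow, hsecond,
    hsq.integral_fun_prod_eq_prod_integral fun i ↦ ((hf i).pow_const 2).aestronglyMeasurable,
    h.integral_fun_prod_eq_prod_integral fun i ↦ (hf i).aestronglyMeasurable]

lemma iIndepFun.variance_fun_mean {n : ℕ} {f : Fin n → Ω → ℝ} (h : iIndepFun f μ)
    (hL2 : ∀ i, MemLp (f i) 2 μ) {v : ℝ} (hv : ∀ i, variance (f i) μ = v) :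
    variance (fun ω ↦ (n : ℝ)⁻¹ * ∑ i, f i ω) μ = (n : ℝ)⁻¹ * v := by
  have hsum : variance (fun ω ↦ ∑ i, f i ω) μ = n * v := by
    simpa [hv, Finset.sum_fn] using IndepFun.variance_sum (s := univ) (fun i _ ↦ hL2 i)
      fun i _ j _ hij ↦ h.indepFun hij
  rw [variance_const_mul, hsum]
  rcases eq_or_ne (n : ℝ) 0 with hn | hn
  · simp [hn]
  · field_simp

lemma integral_fun_mean {n : ℕ} (hn : n ≠ 0) {f : Fin n → Ω → ℝ}
    (hint : ∀ i, Integrable (f i) μ) {m : ℝ} (hm : ∀ i, ∫ ω, f i ω ∂μ = m) :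
    ∫ ω, (n : ℝ)⁻¹ * ∑ i, f i ω ∂μ = m := by
  rw [integral_const_mul, integral_finsetSum _ fun i _ ↦ hint i]
  simp [hm, hn]

end ProbabilityTheory

section ProductExpansion

variable {ι R : Type*} [Fintype ι] [DecidableEq ι] [CommRing R]

lemma prod_mul_add_eq_sum_range (c : R) (v b : ι → R) :
    ∏ i, (c * v i + b i) = ∑ k ∈ range (Fintype.card ι + 1), c ^ k *
      ∑ C ∈ univ.powerset.filter (fun C : Finset ι ↦ C.card = k),
        (∏ i ∈ C, v i) * ∏ j ∈ Cᶜ, b j := by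
  rw [prod_add, sum_powerset, card_univ]
  refine sum_congr rfl fun k _ ↦ ?_
  rw [← powersetCard_eq_filter, mul_sum]
  refine sum_congr rfl fun C hC ↦ ?_
  rw [prod_mul_distrib, prod_const, (mem_powersetCard.1 hC).2, compl_eq_univ_sdiff, mul_assoc]

lemma mul_prod_add_sub_prod_mul_add (c : R) (v b : ι → R) :
    c * (∏ i, (v i + b i) - ∏ i, b i) - (∏ i, (c * v i + b i) - ∏ i, b i)
      = c * ∑ k ∈ Icc 2 (Fintype.card ι), (1 - c ^ (k - 1)) *
        ∑ C ∈ univ.powerset.filter (fun C : Finset ι ↦ C.card = k),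
          (∏ i ∈ C, v i) * ∏ j ∈ Cᶜ, b j := by
  set W : ℕ → R := fun k ↦ ∑ C ∈ univ.powerset.filter (fun C : Finset ι ↦ C.card = k),
    (∏ i ∈ C, v i) * ∏ j ∈ Cᶜ, b j
  have h1 := prod_mul_add_eq_sum_range 1 v b
  have h0 := prod_mul_add_eq_sum_range 0 v b
  simp only [one_mul, one_pow, zero_mul, zero_add] at h1 h0
  have hsub : Icc 2 (Fintype.card ι) ⊆ range (Fintype.card ι + 1) := by
    intro k; simp only [mem_Icc, mem_range]; omega
  calc c * (∏ i, (v i + b i) - ∏ i, b i) - (∏ i, (c * v i + b i) - ∏ i, b i)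
      = ∑ k ∈ range (Fintype.card ι + 1), (c * (1 - 0 ^ k) - (c ^ k - 0 ^ k)) * W k := by
        -- `∏ b` enters as the `c = 0` instance of the expansion, where `0 ^ k` detects `k = 0`.
        rw [h1, h0, prod_mul_add_eq_sum_range c v b, ← sum_sub_distrib, ← sum_sub_distrib,
          mul_sum, ← sum_sub_distrib]
        exact sum_congr rfl fun k _ ↦ by ring
    _ = ∑ k ∈ Icc 2 (Fintype.card ι), c * (1 - c ^ (k - 1)) * W k := by
        refine (sum_subset hsub fun k hk hk' ↦ ?_).symm.trans (sum_congr rfl fun k hk ↦ ?_)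
        · obtain rfl | rfl : k = 0 ∨ k = 1 := by simp only [mem_Icc, mem_range] at hk hk'; omega
          all_goals simp
        · obtain ⟨j, rfl⟩ : ∃ j, k = j + 1 + 1 := ⟨k - 2, by simp only [mem_Icc] at hk; omega⟩
          simp only [add_tsub_cancel_right, pow_succ]
          ring
    _ = _ := by rw [mul_sum]; exact sum_congr rfl fun k _ ↦ mul_assoc _ _ _

end ProductExpansion

lemma variance_prod_means_of_replicates {Ω : Type*} {mΩ : MeasurableSpace Ω} {μ : Measure Ω}
    {N R : ℕ} (hR : R ≠ 0) {X : Fin N → Ω → ℝ} (hXL2 : ∀ i, MemLp (X i) 2 μ)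
    {Y : Fin N → Fin R → Ω → ℝ} (hYmeas : ∀ i r, Measurable (Y i r))
    (hYindep : iIndepFun (fun p : Fin N × Fin R ↦ Y p.1 p.2) μ)
    (hYdist : ∀ i r, IdentDistrib (Y i r) (X i) μ μ) :
    variance (fun ω ↦ ∏ i, ((R : ℝ)⁻¹ * ∑ r, Y i r ω)) μ
      = ∏ i, ((R : ℝ)⁻¹ * variance (X i) μ + (∫ ω, X i ω ∂μ) ^ 2)
        - ∏ i, (∫ ω, X i ω ∂μ) ^ 2 := by
  have := hYindep.isProbabilityMeasure
  have hYL2 (i r) : MemLp (Y i r) 2 μ := (hYdist i r).symm.memLp_snd (hXL2 i)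
  have hrow (i) : iIndepFun (Y i) μ := by
    have := hYindep.precomp (Prod.mk_right_injective (β := Fin R) i); exact this
  have hmeans : iIndepFun (fun i ω ↦ (R : ℝ)⁻¹ * ∑ r, Y i r ω) μ :=
    (iIndepFun_curry hYmeas hYindep).comp (fun _ y ↦ (R : ℝ)⁻¹ * ∑ r, y r) fun _ ↦ by fun_prop
  rw [hmeans.variance_fun_prod (fun i ↦ by fun_prop)
    fun i ↦ (memLp_finsetSum univ fun r _ ↦ hYL2 i r).const_mul _]
  simp only [integral_fun_mean hR (fun r ↦ (hYL2 _ r).integrable one_le_two)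
    fun r ↦ (hYdist _ r).integral_eq,
    (hrow _).variance_fun_mean (hYL2 _) fun r ↦ (hYdist _ r).variance_eq]

lemma variance_mean_prods_of_replicates {Ω : Type*} {mΩ : MeasurableSpace Ω} {μ : Measure Ω}
    {N R : ℕ} {X : Fin N → Ω → ℝ} (hXL2 : ∀ i, MemLp (X i) 2 μ)
    {Y : Fin N → Fin R → Ω → ℝ} (hYmeas : ∀ i r, Measurable (Y i r))
    (hYindep : iIndepFun (fun p : Fin N × Fin R ↦ Y p.1 p.2) μ)
    (hYdist : ∀ i r, IdentDistrib (Y i r) (X i) μ μ) :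
    variance (fun ω ↦ (R : ℝ)⁻¹ * ∑ r, ∏ i, Y i r ω) μ
      = (R : ℝ)⁻¹ * (∏ i, (variance (X i) μ + (∫ ω, X i ω ∂μ) ^ 2)
        - ∏ i, (∫ ω, X i ω ∂μ) ^ 2) := by
  have hYL2 (i r) : MemLp (Y i r) 2 μ := (hYdist i r).symm.memLp_snd (hXL2 i)
  have hcol (r) : iIndepFun (Y · r) μ := by
    have := hYindep.precomp (Prod.mk_left_injective (α := Fin N) r); exact this
  have hprods : iIndepFun (fun r ω ↦ ∏ i, Y i r ω) μ :=
    (iIndepFun_curry (fun r i ↦ hYmeas i r) (hYindep.precomp Prod.swap_injective)).comp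
      (fun _ y ↦ ∏ i, y i) fun _ ↦ by fun_prop
  refine hprods.variance_fun_mean (fun r ↦ (hcol r).memLp_two_fun_prod (hYmeas · r) (hYL2 · r))
    fun r ↦ ?_
  rw [(hcol r).variance_fun_prod (hYmeas · r) (hYL2 · r)]
  simp only [fun i ↦ (hYdist i r).variance_eq, fun i ↦ (hYdist i r).integral_eq]

theorem variance_difference_joint_marginal_general
    {Ω : Type*} [MeasurableSpace Ω] (μ : Measure Ω)
    (N R : ℕ) (hR : 1 ≤ R)
    (X : Fin N → Ω → ℝ)
    (hXL2 : ∀ i, MemLp (X i) 2 μ)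
    (Y : Fin N → Fin R → Ω → ℝ)
    (hYmeas : ∀ i r, Measurable (Y i r))
    (hYindep : iIndepFun (m := fun _ => Real.measurableSpace)
      (fun p : Fin N × Fin R => Y p.1 p.2) μ)
    (hYdist : ∀ i r, IdentDistrib (Y i r) (X i) μ μ) :
    variance (fun ω => (R : ℝ)⁻¹ * ∑ r, ∏ i, Y i r ω) μ
      - variance (fun ω => ∏ i, ((R : ℝ)⁻¹ * ∑ r, Y i r ω)) μ
      = (R : ℝ)⁻¹ * ∑ k ∈ Finset.Icc 2 N, (1 - ((R : ℝ) ^ (k - 1))⁻¹) *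
          ∑ C ∈ Finset.univ.powerset.filter (fun C : Finset (Fin N) => C.card = k),
            (∏ i ∈ C, variance (X i) μ) * ∏ j ∈ Cᶜ, (∫ ω, X j ω ∂μ) ^ 2
    ∧ variance (fun ω => ∏ i, ((R : ℝ)⁻¹ * ∑ r, Y i r ω)) μ
        ≤ variance (fun ω => (R : ℝ)⁻¹ * ∑ r, ∏ i, Y i r ω) μ := by
  have hdiff := mul_prod_add_sub_prod_mul_add (R : ℝ)⁻¹ (fun i ↦ variance (X i) μ)
    fun i ↦ (∫ ω, X i ω ∂μ) ^ 2
  rw [← variance_mean_prods_of_replicates hXL2 hYmeas hYindep hYdist,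
    ← variance_prod_means_of_replicates (by omega) hXL2 hYmeas hYindep hYdist,
    Fintype.card_fin] at hdiff
  simp only [inv_pow] at hdiff
  refine ⟨hdiff, sub_nonneg.1 ?_⟩
  rw [hdiff]
  have hcoef (k : ℕ) : 0 ≤ 1 - ((R : ℝ) ^ (k - 1))⁻¹ :=
    sub_nonneg.2 (inv_le_one_of_one_le₀ (one_le_pow₀ (by exact_mod_cast hR)))
  have hterm (C : Finset (Fin N)) :
      0 ≤ (∏ i ∈ C, variance (X i) μ) * ∏ j ∈ Cᶜ, (∫ ω, X j ω ∂μ) ^ 2 :=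
    mul_nonneg (prod_nonneg fun i _ ↦ variance_nonneg _ _) (prod_nonneg fun j _ ↦ sq_nonneg _)
  exact mul_nonneg (by positivity)
    (sum_nonneg fun k _ ↦ mul_nonneg (hcoef k) (sum_nonneg fun C _ ↦ hterm C))

/-- With the same number of replications `R`,
`Var(Î_J) − Var(Î_M) = (1/R) Σ_{k=2}^N (1 − R^{−(k−1)}) Σ_{|C|=k} ∏_{i∈C} Vᵢ ∏_{j∉C} Eⱼ²`,
and in particular `Var(Î_J) ≥ Var(Î_M)`. -/
theorem variance_difference_joint_marginal
    {Ω : Type*} [MeasurableSpace Ω] (μ : Measure Ω) [IsProbabilityMeasure μ]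
    (N R : ℕ) (hN : 1 ≤ N) (hR : 1 ≤ R)
    (X : Fin N → Ω → ℝ)
    (hXmeas : ∀ i, Measurable (X i))
    (hXL2 : ∀ i, MemLp (X i) 2 μ)
    (hXindep : iIndepFun (m := fun _ => Real.measurableSpace) X μ)
    (Y : Fin N → Fin R → Ω → ℝ)
    (hYmeas : ∀ i r, Measurable (Y i r))
    (hYindep : iIndepFun (m := fun _ => Real.measurableSpace)
      (fun p : Fin N × Fin R => Y p.1 p.2) μ)
    (hYdist : ∀ i r, IdentDistrib (Y i r) (X i) μ μ) :
    variance (fun ω => (R : ℝ)⁻¹ * ∑ r, ∏ i, Y i r ω) μ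
      - variance (fun ω => ∏ i, ((R : ℝ)⁻¹ * ∑ r, Y i r ω)) μ
      = (R : ℝ)⁻¹ * ∑ k ∈ Finset.Icc 2 N, (1 - ((R : ℝ) ^ (k - 1))⁻¹) *
          ∑ C ∈ Finset.univ.powerset.filter (fun C : Finset (Fin N) => C.card = k),
            (∏ i ∈ C, variance (X i) μ) * ∏ j ∈ Cᶜ, (∫ ω, X j ω ∂μ) ^ 2
    ∧ variance (fun ω => ∏ i, ((R : ℝ)⁻¹ * ∑ r, Y i r ω)) μ
        ≤ variance (fun ω => (R : ℝ)⁻¹ * ∑ r, ∏ i, Y i r ω) μ :=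
  variance_difference_joint_marginal_general μ N R hR X hXL2 Y hYmeas hYindep hYdist
end

section
/- Suppose Eᵢ ≠ 0 for every i = 1,…,N, and write CVᵢ² = Vᵢ/Eᵢ² for the squared coefficient of variation. Then the variance of the joint estimator equals Var(Î_J) = (1/R) · (∏_{i=1}^N Eᵢ²) · ( ∏_{i=1}^N (CVᵢ² + 1) − 1 ). -/
/-!
Write `P r = ∏ i, Y i r` for the `r`-th replicate. Within a replicate the factors are independent,
so `E[P r] = ∏ Eᵢ` and `E[(P r)²] = ∏ E[Xᵢ²] = ∏ (Vᵢ + Eᵢ²)`, whence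
`Var(P r) = ∏ (Vᵢ + Eᵢ²) - ∏ Eᵢ²`. Distinct replicates are products over disjoint blocks of the
independent family `Y`, hence independent, so the variance of their mean is `Var(P r) / R`.
Factoring out `∏ Eᵢ²` turns `∏ (Vᵢ + Eᵢ²)` into `∏ Eᵢ² · ∏ (CVᵢ² + 1)`.
-/

open MeasureTheory ProbabilityTheory Finset

namespace ProbabilityTheory

variable {Ω ι : Type*} [MeasurableSpace Ω] {μ : Measure Ω} {f : ι → Ω → ℝ}

lemma iIndepFun.integrable_finsetProd (hf : iIndepFun f μ) (hint : ∀ i, Integrable (f i) μ)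
    (s : Finset ι) : Integrable (fun ω => ∏ i ∈ s, f i ω) μ := by
  classical
  have := hf.isProbabilityMeasure
  induction s using Finset.induction_on with
  | empty => simp
  | insert a s ha ih =>
    simp only [prod_insert ha]
    have hindep := (hf.indepFun_finsetProd_of_notMem₀ (fun i => (hint i).aemeasurable) ha).symm
    simpa only [Pi.mul_def, prod_apply] using hindep.integrable_mul (hint a) (by rwa [prod_fn])

lemma iIndepFun.indepFun_finsetProd_finsetProd (hf : iIndepFun f μ)
    (hmeas : ∀ i, AEMeasurable (f i) μ) {S T : Finset ι} (hST : Disjoint S T) :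
    IndepFun (fun ω => ∏ i ∈ S, f i ω) (fun ω => ∏ i ∈ T, f i ω) μ := by
  have hprod (U : Finset ι) :
      (fun ω => ∏ i ∈ U, f i ω) = (fun v : U → ℝ => ∏ i, v i) ∘ fun ω (i : U) => f i ω := by
    ext ω; simp [Finset.prod_attach U (fun i => f i ω)]
  rw [hprod S, hprod T]
  exact (hf.indepFun_finset₀ S T hST hmeas).comp (by fun_prop) (by fun_prop)

lemma iIndepFun.sq (hf : iIndepFun f μ) : iIndepFun (fun i ω => f i ω ^ 2) μ :=
  hf.comp (fun _ x => x ^ 2) fun _ => by fun_prop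

variable [Fintype ι]

lemma iIndepFun.memLp_two_prod (hf : iIndepFun f μ) (hL2 : ∀ i, MemLp (f i) 2 μ) :
    MemLp (fun ω => ∏ i, f i ω) 2 μ := by
  refine (memLp_two_iff_integrable_sq ?_).2 ?_
  · exact Finset.aestronglyMeasurable_fun_prod _ fun i _ => (hL2 i).aestronglyMeasurable
  · simpa only [← prod_pow] using hf.sq.integrable_finsetProd (fun i => (hL2 i).integrable_sq) univ

lemma iIndepFun.variance_prod [IsProbabilityMeasure μ] (hf : iIndepFun f μ)
    (hL2 : ∀ i, MemLp (f i) 2 μ) :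
    variance (fun ω => ∏ i, f i ω) μ
      = ∏ i, (variance (f i) μ + μ[f i] ^ 2) - (∏ i, μ[f i]) ^ 2 := by
  have hsecond (i : ι) : variance (f i) μ + μ[f i] ^ 2 = ∫ ω, f i ω ^ 2 ∂μ := by
    rw [variance_eq_sub (hL2 i), sub_add_cancel]; rfl
  have hmeas (i : ι) := (hL2 i).aestronglyMeasurable
  rw [variance_eq_sub (hf.memLp_two_prod hL2)]
  simp only [Pi.pow_apply, ← prod_pow, hsecond, hf.integral_fun_prod_eq_prod_integral hmeas,
    hf.sq.integral_fun_prod_eq_prod_integral fun i => (hmeas i).pow 2]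

lemma IndepFun.variance_mean {X : ι → Ω → ℝ} (hL2 : ∀ i, MemLp (X i) 2 μ)
    (hindep : Pairwise fun i j => IndepFun (X i) (X j) μ) {v : ℝ}
    (hv : ∀ i, variance (X i) μ = v) :
    variance (fun ω => (Fintype.card ι : ℝ)⁻¹ * ∑ i, X i ω) μ = (Fintype.card ι : ℝ)⁻¹ * v := by
  have hsum := IndepFun.variance_sum (s := univ) (fun i _ => hL2 i) fun i _ j _ hij => hindep hij
  simp only [sum_fn] at hsum
  rw [variance_const_mul, hsum, sum_congr rfl fun i _ => hv i, sum_const, card_univ, nsmul_eq_mul,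
    ← mul_assoc, sq]
  congr 1
  simpa only [inv_inv] using mul_self_mul_inv (Fintype.card ι : ℝ)⁻¹

end ProbabilityTheory

lemma Finset.prod_sq_mul_prod_div_sq_add_one_sub_one {ι K : Type*} [Field K] (s : Finset ι)
    {e v : ι → K} (he : ∀ i ∈ s, e i ≠ 0) :
    (∏ i ∈ s, e i ^ 2) * (∏ i ∈ s, (v i / e i ^ 2 + 1) - 1)
      = ∏ i ∈ s, (v i + e i ^ 2) - (∏ i ∈ s, e i) ^ 2 := by
  rw [mul_sub, mul_one, ← prod_mul_distrib, prod_pow]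
  congr 1
  refine prod_congr rfl fun i hi => ?_
  field_simp [he i hi]

theorem variance_joint_estimator_cv_general
    {Ω : Type*} [MeasurableSpace Ω] (μ : Measure Ω) [IsProbabilityMeasure μ]
    (N R : ℕ)
    (X : Fin N → Ω → ℝ)
    (hXL2 : ∀ i, MemLp (X i) 2 μ)
    (Y : Fin N → Fin R → Ω → ℝ)
    (hYindep : iIndepFun
      (fun p : Fin N × Fin R => Y p.1 p.2) μ)
    (hYdist : ∀ i r, IdentDistrib (Y i r) (X i) μ μ)
    (hE : ∀ i, (∫ ω, X i ω ∂μ) ≠ 0) :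
    variance (fun ω => (R : ℝ)⁻¹ * ∑ r, ∏ i, Y i r ω) μ
      = (R : ℝ)⁻¹ * (∏ i, (∫ ω, X i ω ∂μ) ^ 2) *
          ((∏ i, (variance (X i) μ / (∫ ω, X i ω ∂μ) ^ 2 + 1)) - 1) := by
  have hYL2 (i : Fin N) (r : Fin R) : MemLp (Y i r) 2 μ := (hYdist i r).memLp_iff.2 (hXL2 i)
  have hcol (r : Fin R) : iIndepFun (fun i => Y i r) μ :=
    hYindep.precomp (g := fun i => (i, r)) fun i j h => (Prod.ext_iff.1 h).1
  have hrow_indep : Pairwise fun r s =>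
      IndepFun (fun ω => ∏ i, Y i r ω) (fun ω => ∏ i, Y i s ω) μ := by
    intro r s hrs
    have hdisj : Disjoint ((univ : Finset (Fin N)) ×ˢ {r}) (univ ×ˢ {s}) :=
      disjoint_product.2 (Or.inr (disjoint_singleton.2 hrs))
    simpa only [prod_product, prod_singleton] using
      hYindep.indepFun_finsetProd_finsetProd (fun p => (hYL2 p.1 p.2).aemeasurable) hdisj
  have hrow_var (r : Fin R) : variance (fun ω => ∏ i, Y i r ω) μ
      = ∏ i, (variance (X i) μ + (∫ ω, X i ω ∂μ) ^ 2) - (∏ i, ∫ ω, X i ω ∂μ) ^ 2 := by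
    simp only [(hcol r).variance_prod (hYL2 · r), (hYdist _ r).variance_eq,
      (hYdist _ r).integral_eq]
  have hmean := IndepFun.variance_mean (X := fun r ω => ∏ i, Y i r ω)
    (fun r => (hcol r).memLp_two_prod (hYL2 · r)) hrow_indep hrow_var
  rw [Fintype.card_fin] at hmean
  rw [hmean, mul_assoc, prod_sq_mul_prod_div_sq_add_one_sub_one _ fun i _ => hE i]

/-- If `Eᵢ ≠ 0` for all `i` and `CVᵢ² = Vᵢ/Eᵢ²`, then
`Var(Î_J) = (1/R) · (∏ᵢ Eᵢ²) · (∏ᵢ (CVᵢ² + 1) − 1)`. -/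
theorem variance_joint_estimator_cv
    {Ω : Type*} [MeasurableSpace Ω] (μ : Measure Ω) [IsProbabilityMeasure μ]
    (N R : ℕ) (hN : 1 ≤ N) (hR : 1 ≤ R)
    (X : Fin N → Ω → ℝ)
    (hXmeas : ∀ i, Measurable (X i))
    (hXL2 : ∀ i, MemLp (X i) 2 μ)
    (hXindep : iIndepFun X μ)
    (Y : Fin N → Fin R → Ω → ℝ)
    (hYmeas : ∀ i r, Measurable (Y i r))
    (hYindep : iIndepFun
      (fun p : Fin N × Fin R => Y p.1 p.2) μ)
    (hYdist : ∀ i r, IdentDistrib (Y i r) (X i) μ μ)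
    (hE : ∀ i, (∫ ω, X i ω ∂μ) ≠ 0) :
    variance (fun ω => (R : ℝ)⁻¹ * ∑ r, ∏ i, Y i r ω) μ
      = (R : ℝ)⁻¹ * (∏ i, (∫ ω, X i ω ∂μ) ^ 2) *
          ((∏ i, (variance (X i) μ / (∫ ω, X i ω ∂μ) ^ 2 + 1)) - 1) :=
  variance_joint_estimator_cv_general μ N R X hXL2 Y hYindep hYdist hE
end

section
/- Let 𝒢 be a sub-σ-algebra of the probability space and let φ₁,…,φ_N be bounded real random variables that are mutually conditionally independent given 𝒢, with conditional variance Var(φᵢ | 𝒢) = E[φᵢ² | 𝒢] − (E[φᵢ | 𝒢])². Then the (unconditional) variance of the product decomposes as Var( ∏_{i=1}^N φᵢ ) = Var( ∏_{i=1}^N E[φᵢ | 𝒢] ) + Σ_{∅ ≠ C ⊆ {1,…,N}} E[ ∏_{i ∈ C} Var(φᵢ | 𝒢) · ∏_{j ∉ C} E[φⱼ | 𝒢]² ]. In particular, the joint Monte Carlo estimator Î_J = (1/R) Σ_{r=1}^R ∏_{i=1}^N φᵢ^{(r)} built from R i.i.d. copies of (φ₁,…,φ_N) has variance equal to 1/R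 times this quantity. -/
/-!
Write `mᵢ = E[φᵢ | 𝒢]` and `sᵢ = E[φᵢ² | 𝒢]`. Conditional independence factors conditional
expectations of products: for a.e. `ω` the `φᵢ` are independent under the regular conditional
probability `condExpKernel μ 𝒢 ω`, so `E[∏ φᵢ | 𝒢] = ∏ mᵢ` and `E[∏ φᵢ² | 𝒢] = ∏ sᵢ`. Hence
`Var(∏ φᵢ) = E[∏ sᵢ] - E[∏ mᵢ]²`, while `Var(∏ mᵢ) = E[∏ mᵢ²] - E[∏ mᵢ]²`. Expanding
`∏ sᵢ = ∏ ((sᵢ - mᵢ²) + mᵢ²)` over the subsets `C` carrying the first summand, the term `C = ∅`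
is `∏ mᵢ²`, and the remaining terms are the sum in the statement. The Monte Carlo estimator is
the mean of `R` independent copies of `∏ φᵢ`, whose variance is `1/R` times that of `∏ φᵢ`.
-/

open MeasureTheory ProbabilityTheory Finset

theorem Finset.prod_sub_prod_eq_sum_nonempty {ι R : Type*} [Fintype ι] [DecidableEq ι]
    [CommRing R] (a b : ι → R) :
    ∏ i, a i - ∏ i, b i
      = ∑ C ∈ univ.powerset.filter (fun C : Finset ι => C.Nonempty),
          (∏ i ∈ C, (a i - b i)) * ∏ j ∈ Cᶜ, b j := by
  have hsplit : ∏ i, a i = ∑ C ∈ univ.powerset, (∏ i ∈ C, (a i - b i)) * ∏ j ∈ Cᶜ, b j := by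
    simp_rw [compl_eq_univ_sdiff, ← prod_add, sub_add_cancel]
  rw [hsplit, ← sum_filter_add_sum_filter_not _ (fun C : Finset ι => C.Nonempty)]
  simp [not_nonempty_iff_eq_empty, filter_eq']

theorem MeasureTheory.memLp_top_fun_prod {α ι 𝕜 : Type*} {mα : MeasurableSpace α}
    [NormedCommRing 𝕜] {μ : Measure α} {s : Finset ι} {f : ι → α → 𝕜}
    (hf : ∀ i ∈ s, MemLp (f i) ⊤ μ) : MemLp (fun x => ∏ i ∈ s, f i x) ⊤ μ := by
  simpa using MemLp.prod' hf

theorem MeasureTheory.integral_prod_sub_integral_prod_eq_sum_nonempty {α ι : Type*}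
    {mα : MeasurableSpace α} {μ : Measure α} [IsFiniteMeasure μ] [Fintype ι] [DecidableEq ι]
    {a b : ι → α → ℝ} (ha : ∀ i, MemLp (a i) ⊤ μ) (hb : ∀ i, MemLp (b i) ⊤ μ) :
    ∫ x, ∏ i, a i x ∂μ - ∫ x, ∏ i, b i x ∂μ
      = ∑ C ∈ univ.powerset.filter (fun C : Finset ι => C.Nonempty),
          ∫ x, (∏ i ∈ C, (a i x - b i x)) * ∏ j ∈ Cᶜ, b j x ∂μ := by
  have hterm : ∀ C : Finset ι,
      Integrable (fun x => (∏ i ∈ C, (a i x - b i x)) * ∏ j ∈ Cᶜ, b j x) μ := fun C =>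
    ((memLp_top_fun_prod fun j _ => hb j).mul'
      (memLp_top_fun_prod fun i _ => (ha i).sub (hb i))).integrable le_top
  rw [← integral_sub ((memLp_top_fun_prod fun i _ => ha i).integrable le_top)
      ((memLp_top_fun_prod fun i _ => hb i).integrable le_top),
    ← integral_finsetSum _ fun C _ => hterm C]
  simp only [prod_sub_prod_eq_sum_nonempty]

theorem ProbabilityTheory.Kernel.iIndepFun.ae_iIndepFun {α Ω ι : Type*} {mα : MeasurableSpace α}
    {mΩ : MeasurableSpace Ω} [Finite ι] {κ : Kernel α Ω} {μ : Measure α} {f : ι → Ω → ℝ}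
    (hf : ∀ i, Measurable (f i)) (h : Kernel.iIndepFun f κ μ) :
    ∀ᵐ a ∂μ, ProbabilityTheory.iIndepFun f (κ a) := by
  -- The sets `{f i < q}`, `q : ℚ`, generate the σ-algebras and are countably many, so their
  -- product formula holds simultaneously for a.e. `a`; π-system uniqueness does the rest.
  have hrat : ∀ᵐ a ∂μ, ∀ (S : Finset ι) (q : ι → ℚ),
      κ a (⋂ i ∈ S, f i ⁻¹' Set.Iio (q i : ℝ)) = ∏ i ∈ S, κ a (f i ⁻¹' Set.Iio (q i : ℝ)) := by
    simp only [ae_all_iff]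
    exact fun S q => Kernel.iIndepFun.measure_inter_preimage_eq_mul _ _ h S
      fun i _ => measurableSet_Iio
  filter_upwards [hrat, h.ae_isProbabilityMeasure] with a ha _
  rw [ProbabilityTheory.iIndepFun_iff_iIndep]
  refine ProbabilityTheory.iIndepSets.iIndep (fun i => (hf i).comap_le)
    (fun i => Set.preimage (f i) '' ⋃ q : ℚ, {Set.Iio (q : ℝ)})
    (fun i => Real.isPiSystem_Iio_rat.comap (f i))
    (fun i => by
      rw [← MeasurableSpace.comap_generateFrom, ← Real.borel_eq_generateFrom_Iio_rat]; rfl)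
    ?_
  rw [ProbabilityTheory.iIndepSets_iff]
  intro S g hg
  choose! q hq using fun i hi => (by simpa using hg i hi : ∃ q : ℚ, f i ⁻¹' Set.Iio (q : ℝ) = g i)
  rw [Set.iInter₂_congr fun i hi => (hq i hi).symm, prod_congr rfl fun i hi => by rw [← hq i hi]]
  exact ha S q

namespace ProbabilityTheory

section Conditional

variable {Ω ι : Type*} {m mΩ : MeasurableSpace Ω} [StandardBorelSpace Ω] {μ : Measure Ω}
  {hm : m ≤ mΩ} [Fintype ι] {f : ι → Ω → ℝ}

theorem iCondIndepFun.condExp_prod_ae_eq [IsFiniteMeasure μ] (h : iCondIndepFun m hm f μ)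
    (hf : ∀ i, Measurable (f i)) (hfi : ∀ i, Integrable (f i) μ)
    (hprod : Integrable (fun ω => ∏ i, f i ω) μ) :
    μ[fun ω => ∏ i, f i ω | m] =ᵐ[μ] fun ω => ∏ i, μ[f i | m] ω := by
  have hfactor := ae_of_ae_trim hm (Kernel.iIndepFun.ae_iIndepFun hf h)
  have hcomponents : ∀ᵐ ω ∂μ, ∀ i, μ[f i | m] ω = ∫ y, f i y ∂condExpKernel μ m ω :=
    ae_all_iff.2 fun i => condExp_ae_eq_integral_condExpKernel hm (hfi i)
  filter_upwards [condExp_ae_eq_integral_condExpKernel hm hprod, hcomponents, hfactor]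
    with ω hprodω hcompω hfactorω
  rw [hprodω, hfactorω.integral_fun_prod_eq_prod_integral fun i => (hf i).aestronglyMeasurable]
  exact prod_congr rfl fun i _ => (hcompω i).symm

theorem iCondIndepFun.integral_prod_eq_integral_prod_condExp [IsFiniteMeasure μ]
    (h : iCondIndepFun m hm f μ) (hf : ∀ i, Measurable (f i)) (hfi : ∀ i, MemLp (f i) ⊤ μ) :
    ∫ ω, ∏ i, f i ω ∂μ = ∫ ω, ∏ i, μ[f i | m] ω ∂μ := by
  rw [← integral_condExp hm]
  exact integral_congr_ae <| h.condExp_prod_ae_eq hf (fun i => (hfi i).integrable le_top)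
    ((memLp_top_fun_prod fun i _ => hfi i).integrable le_top)

theorem iCondIndepFun.variance_prod [IsProbabilityMeasure μ] [DecidableEq ι]
    (h : iCondIndepFun m hm f μ) (hf : ∀ i, Measurable (f i)) (hfi : ∀ i, MemLp (f i) ⊤ μ) :
    variance (fun ω => ∏ i, f i ω) μ
      = variance (fun ω => ∏ i, μ[f i | m] ω) μ
        + ∑ C ∈ univ.powerset.filter (fun C : Finset ι => C.Nonempty),
            ∫ ω, (∏ i ∈ C, (μ[fun ω' => f i ω' ^ 2 | m] ω - μ[f i | m] ω ^ 2))
              * ∏ j ∈ Cᶜ, μ[f j | m] ω ^ 2 ∂μ := by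
  have memLp_sq : ∀ {g : Ω → ℝ}, MemLp g ⊤ μ → MemLp (fun ω => g ω ^ 2) ⊤ μ := fun hg => by
    simpa only [sq] using hg.mul' hg
  have hfi_sq : ∀ i, MemLp (fun ω => f i ω ^ 2) ⊤ μ := fun i => memLp_sq (hfi i)
  have hcond : ∀ i, MemLp (μ[f i | m]) ⊤ μ := fun i => (hfi i).condExp le_top
  have h_sq : iCondIndepFun m hm (fun i ω => f i ω ^ 2) μ :=
    Kernel.iIndepFun.comp h _ fun _ => measurable_id.pow_const 2
  rw [variance_eq_sub ((memLp_top_fun_prod fun i _ => hfi i).mono_exponent le_top),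
    variance_eq_sub ((memLp_top_fun_prod fun i _ => hcond i).mono_exponent le_top),
    h.integral_prod_eq_integral_prod_condExp hf hfi]
  simp only [Pi.pow_apply, ← prod_pow]
  rw [h_sq.integral_prod_eq_integral_prod_condExp (fun i => (hf i).pow_const 2) hfi_sq,
    ← integral_prod_sub_integral_prod_eq_sum_nonempty (fun i => (hfi_sq i).condExp le_top)
      fun i => memLp_sq (hcond i)]
  ring

end Conditional

theorem variance_mean_of_pairwise_indepFun_of_identDistrib {Ω Ω' ι : Type*} {mΩ : MeasurableSpace Ω}
    {mΩ' : MeasurableSpace Ω'} {μ : Measure Ω} {ν : Measure Ω'} [Fintype ι] {X : ι → Ω → ℝ}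
    {Y : Ω' → ℝ}
    (hindep : Pairwise fun i j => IndepFun (X i) (X j) μ) (hident : ∀ i, IdentDistrib (X i) Y μ ν)
    (hY : MemLp Y 2 ν) :
    variance (fun ω => (Fintype.card ι : ℝ)⁻¹ * ∑ i, X i ω) μ
      = (Fintype.card ι : ℝ)⁻¹ * variance Y ν := by
  have hsum : variance (fun ω => ∑ i, X i ω) μ = Fintype.card ι * variance Y ν := by
    rw [← sum_fn, IndepFun.variance_sum (fun i _ => (hident i).symm.memLp_snd hY)
      fun i _ j _ hij => hindep hij]
    simp [fun i => (hident i).variance_eq]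
  set n : ℝ := (Fintype.card ι : ℝ)
  calc variance (fun ω => n⁻¹ * ∑ i, X i ω) μ = n / (n * n) * variance Y ν := by
        rw [variance_const_mul, hsum]; ring
    _ = n⁻¹ * variance Y ν := by rw [div_self_mul_self']

end ProbabilityTheory

theorem variance_prod_of_iCondIndepFun_general
    {Ω : Type*} (𝒢 : MeasurableSpace Ω) {mΩ : MeasurableSpace Ω} [StandardBorelSpace Ω]
    (μ : Measure Ω) [IsProbabilityMeasure μ]
    (h𝒢 : 𝒢 ≤ mΩ)
    (N : ℕ) (φ : Fin N → Ω → ℝ)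
    (hmeas : ∀ i, Measurable (φ i))
    (hbdd : ∀ i, ∃ C, ∀ ω, |φ i ω| ≤ C)
    (hindep : iCondIndepFun 𝒢 h𝒢 (m := fun _ => Real.measurableSpace) φ μ)
    (R : ℕ)
    (Φ : Fin R → Ω → (Fin N → ℝ))
    (hΦindep : iIndepFun (m := fun _ => (inferInstance : MeasurableSpace (Fin N → ℝ))) Φ μ)
    (hΦdist : ∀ r, IdentDistrib (Φ r) (fun ω i => φ i ω) μ μ) :
    variance (fun ω => ∏ i, φ i ω) μ
      = variance (fun ω => ∏ i, (μ[φ i | 𝒢]) ω) μ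
        + ∑ C ∈ Finset.univ.powerset.filter (fun C : Finset (Fin N) => C.Nonempty),
            ∫ ω, (∏ i ∈ C, ((μ[fun ω' => φ i ω' ^ 2 | 𝒢]) ω - ((μ[φ i | 𝒢]) ω) ^ 2))
              * ∏ j ∈ Cᶜ, ((μ[φ j | 𝒢]) ω) ^ 2 ∂μ
    ∧ variance (fun ω => (R : ℝ)⁻¹ * ∑ r, ∏ i, Φ r ω i) μ
      = (R : ℝ)⁻¹ *
        (variance (fun ω => ∏ i, (μ[φ i | 𝒢]) ω) μ
          + ∑ C ∈ Finset.univ.powerset.filter (fun C : Finset (Fin N) => C.Nonempty),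
              ∫ ω, (∏ i ∈ C, ((μ[fun ω' => φ i ω' ^ 2 | 𝒢]) ω - ((μ[φ i | 𝒢]) ω) ^ 2))
                * ∏ j ∈ Cᶜ, ((μ[φ j | 𝒢]) ω) ^ 2 ∂μ) := by
  have hφ_top : ∀ i, MemLp (φ i) ⊤ μ := fun i =>
    let ⟨C, hC⟩ := hbdd i
    memLp_top_of_bound (hmeas i).aestronglyMeasurable C (ae_of_all _ hC)
  have hdecomp := hindep.variance_prod hmeas hφ_top
  refine ⟨hdecomp, ?_⟩
  have hprod : Measurable fun v : Fin N → ℝ => ∏ i, v i := by fun_prop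
  rw [← hdecomp]
  simpa using variance_mean_of_pairwise_indepFun_of_identDistrib
    (X := fun r ω => ∏ i, Φ r ω i) (Y := fun ω => ∏ i, φ i ω)
    (fun r s hrs => (hΦindep.indepFun hrs).comp hprod hprod) (fun r => (hΦdist r).comp hprod)
    ((memLp_top_fun_prod fun i _ => hφ_top i).mono_exponent le_top)

/-- For bounded real random variables `φ₁,…,φ_N` that are mutually
conditionally independent given `𝒢`, the unconditional variance of the product decomposes
as `Var(∏ᵢ φᵢ) = Var(∏ᵢ E[φᵢ|𝒢]) + Σ_{∅ ≠ C} E[∏_{i∈C} Var(φᵢ|𝒢) ∏_{j∉C} E[φⱼ|𝒢]²]`;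
in particular the joint Monte Carlo estimator built from `R` i.i.d. copies of the vector
`(φ₁,…,φ_N)` has variance equal to `1/R` times this quantity. -/
theorem variance_prod_of_iCondIndepFun
    {Ω : Type*} (𝒢 : MeasurableSpace Ω) {mΩ : MeasurableSpace Ω} [StandardBorelSpace Ω]
    (μ : Measure Ω) [IsProbabilityMeasure μ]
    (h𝒢 : 𝒢 ≤ mΩ)
    (N : ℕ) (φ : Fin N → Ω → ℝ)
    (hmeas : ∀ i, Measurable (φ i))
    (hbdd : ∀ i, ∃ C, ∀ ω, |φ i ω| ≤ C)
    (hindep : iCondIndepFun 𝒢 h𝒢 (m := fun _ => Real.measurableSpace) φ μ)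
    (R : ℕ) (hR : 1 ≤ R)
    (Φ : Fin R → Ω → (Fin N → ℝ))
    (hΦmeas : ∀ r, Measurable (Φ r))
    (hΦindep : iIndepFun (m := fun _ => (inferInstance : MeasurableSpace (Fin N → ℝ))) Φ μ)
    (hΦdist : ∀ r, IdentDistrib (Φ r) (fun ω i => φ i ω) μ μ) :
    variance (fun ω => ∏ i, φ i ω) μ
      = variance (fun ω => ∏ i, (μ[φ i | 𝒢]) ω) μ
        + ∑ C ∈ Finset.univ.powerset.filter (fun C : Finset (Fin N) => C.Nonempty),
            ∫ ω, (∏ i ∈ C, ((μ[fun ω' => φ i ω' ^ 2 | 𝒢]) ω - ((μ[φ i | 𝒢]) ω) ^ 2))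
              * ∏ j ∈ Cᶜ, ((μ[φ j | 𝒢]) ω) ^ 2 ∂μ
    ∧ variance (fun ω => (R : ℝ)⁻¹ * ∑ r, ∏ i, Φ r ω i) μ
      = (R : ℝ)⁻¹ *
        (variance (fun ω => ∏ i, (μ[φ i | 𝒢]) ω) μ
          + ∑ C ∈ Finset.univ.powerset.filter (fun C : Finset (Fin N) => C.Nonempty),
              ∫ ω, (∏ i ∈ C, ((μ[fun ω' => φ i ω' ^ 2 | 𝒢]) ω - ((μ[φ i | 𝒢]) ω) ^ 2))
                * ∏ j ∈ Cᶜ, ((μ[φ j | 𝒢]) ω) ^ 2 ∂μ) :=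
  variance_prod_of_iCondIndepFun_general 𝒢 μ h𝒢 N φ hmeas hbdd hindep R Φ hΦindep hΦdist
end

section
/- Let Y₁,…,Y_N (N ≥ 3) be bounded real random variables with total covariation TCI(Y) = E(∏_{i=1}^N Yᵢ) − ∏_{i=1}^N E(Yᵢ). Then |TCI(Y)| ≤ Σ_{k=0}^{N−2} [ ( ∏_{i=N+1−k}^{N} |E(Yᵢ)| ) · √( Var( ∏_{i=1}^{N−k−1} Yᵢ ) · Var( Y_{N−k} ) ) ], where a product over an empty index range (the k = 0 term) equals 1. -/
/-! With `a j = E(Y₁⋯Y_j)` and `m i = E(Yᵢ)`, the defect `D_j = a j - m 1 ⋯ m j` satisfies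
`D_1 = 0` and `D_{j+1} = Cov(Y₁⋯Y_j, Y_{j+1}) + m (j+1) · D_j`. Unrolling this recursion and
bounding each covariance by Cauchy–Schwarz gives the sum on the right-hand side. -/

open MeasureTheory ProbabilityTheory Finset

lemma abs_integral_mul_le_sqrt_mul_sqrt {α : Type*} [MeasurableSpace α] {μ : Measure α}
    {f g : α → ℝ} (hf : MemLp f 2 μ) (hg : MemLp g 2 μ) :
    |∫ x, f x * g x ∂μ| ≤ √(∫ x, f x ^ 2 ∂μ) * √(∫ x, g x ^ 2 ∂μ) := by
  have hsq (h : α → ℝ) : ∫ x, ‖h x‖ ^ (2 : ℝ) ∂μ = ∫ x, h x ^ 2 ∂μ := by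
    simp [Real.norm_eq_abs, sq_abs]
  calc |∫ x, f x * g x ∂μ| ≤ ∫ x, ‖f x‖ * ‖g x‖ ∂μ := by
        simpa [norm_mul] using norm_integral_le_integral_norm (fun x ↦ f x * g x)
    _ ≤ (∫ x, ‖f x‖ ^ (2 : ℝ) ∂μ) ^ (1 / (2 : ℝ)) * (∫ x, ‖g x‖ ^ (2 : ℝ) ∂μ) ^ (1 / (2 : ℝ)) :=
        integral_mul_norm_le_Lp_mul_Lq .two_two (by simpa using hf) (by simpa using hg)
    _ = √(∫ x, f x ^ 2 ∂μ) * √(∫ x, g x ^ 2 ∂μ) := by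
        rw [hsq, hsq, Real.sqrt_eq_rpow, Real.sqrt_eq_rpow]

lemma abs_covariance_le_sqrt_variance_mul {Ω : Type*} [MeasurableSpace Ω] {μ : Measure Ω}
    [IsFiniteMeasure μ] {X Y : Ω → ℝ} (hX : MemLp X 2 μ) (hY : MemLp Y 2 μ) :
    |cov[X, Y; μ]| ≤ √(Var[X; μ] * Var[Y; μ]) := by
  rw [variance_eq_integral hX.aemeasurable, variance_eq_integral hY.aemeasurable,
    Real.sqrt_mul (integral_nonneg fun _ ↦ sq_nonneg _)]
  exact abs_integral_mul_le_sqrt_mul_sqrt (hX.sub (memLp_const _)) (hY.sub (memLp_const _))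

lemma abs_sub_prod_le_sum_of_abs_sub_mul_le {a m c : ℕ → ℝ} {n : ℕ} (h0 : a 0 = 1)
    (h1 : a 1 = m 1) (hstep : ∀ j < n, |a (j + 1) - a j * m (j + 1)| ≤ c (j + 1)) :
    |a n - ∏ i ∈ Icc 1 n, m i|
      ≤ ∑ k ∈ range (n - 1), (∏ i ∈ Icc (n + 1 - k) n, |m i|) * c (n - k) := by
  obtain _ | n := n
  · simp [h0]
  induction n with
  | zero => simp [h1]
  | succ n ih =>
    have hdefect : a (n + 2) - ∏ i ∈ Icc 1 (n + 2), m i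
        = (a (n + 2) - a (n + 1) * m (n + 2))
          + m (n + 2) * (a (n + 1) - ∏ i ∈ Icc 1 (n + 1), m i) := by
      rw [prod_Icc_succ_top (by omega)]
      ring
    have hsum : ∑ k ∈ range (n + 1), (∏ i ∈ Icc (n + 3 - k) (n + 2), |m i|) * c (n + 2 - k)
        = c (n + 2) + |m (n + 2)|
          * ∑ k ∈ range n, (∏ i ∈ Icc (n + 2 - k) (n + 1), |m i|) * c (n + 1 - k) := by
      rw [sum_range_succ', mul_sum, add_comm]
      congr 1
      · simp
      · refine sum_congr rfl fun k _ ↦ ?_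
        rw [show n + 3 - (k + 1) = n + 2 - k by omega, show n + 2 - (k + 1) = n + 1 - k by omega,
          prod_Icc_succ_top (by omega)]
        ring
    simp only [Nat.add_sub_cancel] at ih hsum ⊢
    rw [hdefect, hsum]
    calc _ ≤ |a (n + 2) - a (n + 1) * m (n + 2)|
          + |m (n + 2)| * |a (n + 1) - ∏ i ∈ Icc 1 (n + 1), m i| := by
          rw [← abs_mul]
          exact abs_add_le _ _
      _ ≤ _ := add_le_add (hstep _ (by omega))
          (mul_le_mul_of_nonneg_left (ih fun j hj ↦ hstep j (by omega)) (abs_nonneg _))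

theorem total_covariation_upper_bound_general
    {Ω : Type*} [MeasurableSpace Ω] (μ : Measure Ω) [IsProbabilityMeasure μ]
    (N : ℕ) (Y : ℕ → Ω → ℝ)
    (hmeas : ∀ i ∈ Finset.Icc 1 N, Measurable (Y i))
    (hbdd : ∀ i ∈ Finset.Icc 1 N, ∃ C, ∀ ω, |Y i ω| ≤ C) :
    |(∫ ω, ∏ i ∈ Finset.Icc 1 N, Y i ω ∂μ) - ∏ i ∈ Finset.Icc 1 N, ∫ ω, Y i ω ∂μ|
      ≤ ∑ k ∈ Finset.range (N - 1),
          (∏ i ∈ Finset.Icc (N + 1 - k) N, |∫ ω, Y i ω ∂μ|) *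
            Real.sqrt (variance (fun ω => ∏ i ∈ Finset.Icc 1 (N - k - 1), Y i ω) μ
              * variance (Y (N - k)) μ) := by
  have hY : ∀ i ∈ Icc 1 N, MemLp (Y i) ⊤ μ := fun i hi ↦
    have ⟨C, hC⟩ := hbdd i hi
    memLp_top_of_bound (hmeas i hi).aestronglyMeasurable C (.of_forall hC)
  have hprod : ∀ j ≤ N, MemLp (fun ω ↦ ∏ i ∈ Icc 1 j, Y i ω) ⊤ μ := fun j hj ↦ by
    simpa using MemLp.prod' (p := fun _ ↦ ⊤) fun i hi ↦ hY i (Icc_subset_Icc_right hj hi)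
  refine abs_sub_prod_le_sum_of_abs_sub_mul_le (a := fun j ↦ ∫ ω, ∏ i ∈ Icc 1 j, Y i ω ∂μ)
    (m := fun i ↦ ∫ ω, Y i ω ∂μ)
    (c := fun j ↦ √(Var[fun ω ↦ ∏ i ∈ Icc 1 (j - 1), Y i ω; μ] * Var[Y j; μ]))
    (by simp) (by simp) fun j hjN ↦ ?_
  have hP : MemLp (fun ω ↦ ∏ i ∈ Icc 1 j, Y i ω) 2 μ := (hprod j hjN.le).mono_exponent le_top
  have hYj : MemLp (Y (j + 1)) 2 μ := (hY _ (mem_Icc.2 ⟨by omega, hjN⟩)).mono_exponent le_top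
  have hcov : (∫ ω, ∏ i ∈ Icc 1 (j + 1), Y i ω ∂μ)
      - (∫ ω, ∏ i ∈ Icc 1 j, Y i ω ∂μ) * ∫ ω, Y (j + 1) ω ∂μ
      = cov[fun ω ↦ ∏ i ∈ Icc 1 j, Y i ω, Y (j + 1); μ] := by
    rw [covariance_eq_sub hP hYj]
    simp [prod_Icc_succ_top]
  simpa [hcov] using abs_covariance_le_sqrt_variance_mul hP hYj

/-- For bounded real random variables `Y₁,…,Y_N` (`N ≥ 3`), the total
covariation `TCI(Y) = E(∏ᵢ Yᵢ) − ∏ᵢ E(Yᵢ)` satisfies the Cauchy–Schwarz bound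
`|TCI(Y)| ≤ Σ_{k=0}^{N−2} (∏_{i=N+1−k}^N |E(Yᵢ)|) √(Var(∏_{i=1}^{N−k−1} Yᵢ) Var(Y_{N−k}))`. -/
theorem total_covariation_upper_bound
    {Ω : Type*} [MeasurableSpace Ω] (μ : Measure Ω) [IsProbabilityMeasure μ]
    (N : ℕ) (hN : 3 ≤ N) (Y : ℕ → Ω → ℝ)
    (hmeas : ∀ i ∈ Finset.Icc 1 N, Measurable (Y i))
    (hbdd : ∀ i ∈ Finset.Icc 1 N, ∃ C, ∀ ω, |Y i ω| ≤ C) :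
    |(∫ ω, ∏ i ∈ Finset.Icc 1 N, Y i ω ∂μ) - ∏ i ∈ Finset.Icc 1 N, ∫ ω, Y i ω ∂μ|
      ≤ ∑ k ∈ Finset.range (N - 1),
          (∏ i ∈ Finset.Icc (N + 1 - k) N, |∫ ω, Y i ω ∂μ|) *
            Real.sqrt (variance (fun ω => ∏ i ∈ Finset.Icc 1 (N - k - 1), Y i ω) μ
              * variance (Y (N - k)) μ) :=
  total_covariation_upper_bound_general μ N Y hmeas hbdd
end
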